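/- The even subalgebra of the Clifford algebra G(2,1) = CliffordAlgebra Q, where Q(v)=v₁²+v₂²−v₃² on ℝ³, is isomorphic as an ℝ-algebra to the split-quaternions, i.e. to QuaternionAlgebra ℝ (−1) 1 (equivalently to the algebra of 2×2 real matrices). -/

import Mathlib

/-! The even subalgebra of `Q ⊕ ⟨-1⟩` is `Cl(Q)` (`CliffordAlgebra.equivEven`), and
`Q21 = x² + y² - z²` is of this form with `Q = x² + y²`. Mathlib identifies `Cl(x² + y²)` with
`ℍ[ℝ, 1, 1]`, and exchanging `i` and `k` turns this into `ℍ[ℝ, -1, 1]`; transporting even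
subalgebras along isometries glues these steps together. -/

open CliffordAlgebra
open scoped Quaternion

/-- The quadratic form `Q(v) = v₁² + v₂² - v₃²` on `ℝ³` (signature (2,1)). -/
noncomputable def Q21 : QuadraticForm ℝ (Fin 3 → ℝ) :=
  QuadraticMap.weightedSumSquares ℝ ![(1 : ℝ), 1, -1]

namespace CliffordAlgebra

variable {R M₁ M₂ M₃ A : Type*} [CommRing R] [AddCommGroup M₁] [AddCommGroup M₂] [AddCommGroup M₃]
  [Module R M₁] [Module R M₂] [Module R M₃] [Ring A] [Algebra R A]
  {Q₁ : QuadraticForm R M₁} {Q₂ : QuadraticForm R M₂} {Q₃ : QuadraticForm R M₃}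

def EvenHom.compIsometry (g : EvenHom Q₂ A) (f : Q₁ →qᵢ Q₂) : EvenHom Q₁ A where
  bilin := g.bilin.compl₁₂ f.toLinearMap f.toLinearMap
  contract m := by simp [g.contract]
  contract_mid m₁ m₂ m₃ := by simp [g.contract_mid]

noncomputable def even.map (f : Q₁ →qᵢ Q₂) : even Q₁ →ₐ[R] even Q₂ :=
  even.lift Q₁ ((even.ι Q₂).compIsometry f)

@[simp]
theorem even.map_ι (f : Q₁ →qᵢ Q₂) (m₁ m₂ : M₁) :
    even.map f ((even.ι Q₁).bilin m₁ m₂) = (even.ι Q₂).bilin (f m₁) (f m₂) :=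
  even.lift_ι _ _ _ _

theorem even.map_comp_map (g : Q₂ →qᵢ Q₃) (f : Q₁ →qᵢ Q₂) :
    (even.map g).comp (even.map f) = even.map (g.comp f) := by
  ext; simp

noncomputable def even.equivOfIsometry (e : Q₁.IsometryEquiv Q₂) : even Q₁ ≃ₐ[R] even Q₂ :=
  AlgEquiv.ofAlgHom (even.map e.toIsometry) (even.map e.symm.toIsometry)
    (by rw [even.map_comp_map]; ext; simp)
    (by rw [even.map_comp_map]; ext; simp)

end CliffordAlgebra

namespace QuaternionAlgebra

variable {R : Type*} [CommRing R] (c₁ : R)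

/-- Exchanging `i` and `k`: the element `k` of `ℍ[R, c₁, 1]` squares to `-c₁` and `k * j = i`. -/
def swapIK : ℍ[R, c₁, 1] ≃ₐ[R] ℍ[R, -c₁, 1] where
  toFun q := ⟨q.re, q.imK, q.imJ, q.imI⟩
  invFun q := ⟨q.re, q.imK, q.imJ, q.imI⟩
  left_inv _ := rfl
  right_inv _ := rfl
  map_mul' x y := by ext <;> simp only [re_mul, imI_mul, imJ_mul, imK_mul] <;> ring
  map_add' _ _ := rfl
  commutes' _ := rfl

end QuaternionAlgebra

def weightedSumSquaresIsometryEquivQ' {R : Type*} [CommRing R] (c₁ c₂ : R) :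
    (QuadraticMap.weightedSumSquares R ![c₁, c₂, -1]).IsometryEquiv
      (EquivEven.Q' (CliffordAlgebraQuaternion.Q c₁ c₂)) where
  toFun v := ((v 0, v 1), v 2)
  invFun p := ![p.1.1, p.1.2, p.2]
  map_add' _ _ := rfl
  map_smul' _ _ := rfl
  left_inv v := by ext i; fin_cases i <;> rfl
  right_inv _ := rfl
  map_app' v := by
    simp [QuadraticMap.weightedSumSquares_apply, Fin.sum_univ_three]

/-- The even subalgebra of `G(2,1)` is isomorphic as an `ℝ`-algebra to the split-quaternions
`ℍ[ℝ, -1, 1] = QuaternionAlgebra ℝ (-1) 1`. -/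
theorem even_G21_iso_split_quaternions :
    Nonempty (CliffordAlgebra.even Q21 ≃ₐ[ℝ] ℍ[ℝ, -1, 1]) :=
  ⟨(even.equivOfIsometry (weightedSumSquaresIsometryEquivQ' 1 1)).trans <|
    (equivEven _).symm.trans <|
      CliffordAlgebraQuaternion.equiv.trans (QuaternionAlgebra.swapIK 1)⟩
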